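/- arXiv:2301.00784 — 2 statements merged into one kernel-verified Lean document; each statement's English description precedes it below -/
import Mathlib

section
/- Let m be a regular multisegment and Δ a segment occurring in m. Then the three conditions LC(Δ, m), RC(Δ, m) and RC(Δ, m∖Δ) all hold if and only if Δ is preceded by no other segment of m and the multisegment consisting of Δ together with all segments of m that Δ precedes is a ladder. -/
/-- A segment `[a;b]` is a pair of integers `a ≤ b`. -/
structure Segment where
  a : ℤ
  b : ℤ
  le : a ≤ b

namespace Segment

/-- `Δ ≺ Δ'` : the segment `Δ = [a;b]` precedes `Δ' = [c;d]`,
i.e. `a < c`, `c - 1 ≤ b` and `b < d`. -/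
def prec (Δ Δ' : Segment) : Prop :=
  Δ.a < Δ'.a ∧ Δ'.a - 1 ≤ Δ.b ∧ Δ.b < Δ'.b

/-- `←Δ = [a-1; b-1]`. -/
def shift (Δ : Segment) : Segment :=
  ⟨Δ.a - 1, Δ.b - 1, by have := Δ.le; omega⟩

instance (Δ Δ' : Segment) : Decidable (Δ.prec Δ') := by
  unfold prec; infer_instance

end Segment

/-- A multisegment (given as an indexed family of segments) is regular if the beginnings
of its segments are pairwise distinct and the ends of its segments are pairwise distinct. -/
def Regular {ι : Type*} (Δ : ι → Segment) : Prop :=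
  (∀ i j : ι, (Δ i).a = (Δ j).a → i = j) ∧ (∀ i j : ι, (Δ i).b = (Δ j).b → i = j)

/-- The condition `LC(Δ₀, m)` : there is an injective function
`f : X_{Δ₀,m} → Y_{Δ₀,m}` with `Δ_{f i} ≺ Δ_i` for all `i ∈ X_{Δ₀,m}`,
where `X_{Δ₀,m} = {i | Δ₀ ≺ Δ_i}` and `Y_{Δ₀,m} = {i | ←Δ₀ ≺ Δ_i}`. -/
def LC {ι : Type*} (Δ₀ : Segment) (Δ : ι → Segment) : Prop :=
  ∃ f : ι → ι, Set.InjOn f {i | Δ₀.prec (Δ i)} ∧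
    ∀ i : ι, Δ₀.prec (Δ i) → Δ₀.shift.prec (Δ (f i)) ∧ (Δ (f i)).prec (Δ i)

/-- The condition `RC(Δ₀, m)` : there is an injective function
`f : X̃_{Δ₀,m} → Ỹ_{Δ₀,m}` with `Δ_i ≺ Δ_{f i}` for all `i ∈ X̃_{Δ₀,m}`,
where `X̃_{Δ₀,m} = {i | Δ_i ≺ Δ₀}` and `Ỹ_{Δ₀,m} = {i | ←Δ_i ≺ Δ₀}`. -/
def RC {ι : Type*} (Δ₀ : Segment) (Δ : ι → Segment) : Prop :=
  ∃ f : ι → ι, Set.InjOn f {i | (Δ i).prec Δ₀} ∧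
    ∀ i : ι, (Δ i).prec Δ₀ → (Δ (f i)).shift.prec Δ₀ ∧ (Δ i).prec (Δ (f i))

/-- The sub-multisegment of `Δ` indexed by the finite set `S` is a ladder: its segments can
be enumerated so that both the beginnings and the ends are strictly decreasing. -/
def IsLadder {ι : Type*} (Δ : ι → Segment) (S : Finset ι) : Prop :=
  ∃ e : Fin S.card ≃ {x // x ∈ S}, ∀ k l : Fin S.card, k < l →
    (Δ (e l).val).a < (Δ (e k).val).a ∧ (Δ (e l).val).b < (Δ (e k).val).b

/-!
Let `S` consist of `Δ₀` and the segments it precedes. By regularity, a witness of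
`LC(Δ₀, m)` is the same as an injective map `S ∖ {Δ₀} → S` lowering both beginnings and
ends. Ordering `S` by ends, a counting argument shows that an injective map lowering the ends
must send every segment to its predecessor; so such a witness exists exactly when the
beginnings increase with the ends, i.e. when `S` is a ladder. A witness of `RC(Δ₀, m ∖ Δ₀)`
sends a segment preceding `Δ₀` to another one with larger end, which is impossible in a finite
multisegment unless nothing precedes `Δ₀`; and then both `RC` conditions hold vacuously.
-/

open Finset

section Descent

variable {ι α β : Type*} [DecidableEq ι] [LinearOrder α] [Preorder β]
  {S : Finset ι} {i₀ : ι} {b : ι → α} {a : ι → β} {f : ι → ι}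

theorem le_apply_of_injOn_descent (hinj : Set.InjOn f (S.erase i₀))
    (hmaps : ∀ j ∈ S.erase i₀, f j ∈ S ∧ b (f j) < b j)
    {j k : ι} (hj : j ∈ S.erase i₀) (hk : k ∈ S) (hkj : b k < b j) : b k ≤ b (f j) := by
  -- Otherwise `f` maps `{j} ∪ (L ∖ {i₀})` injectively into the smaller set `L ∖ {k}`.
  by_contra! hfk
  set L := S.filter (b · ≤ b k)
  have hkL : k ∈ L := mem_filter.2 ⟨hk, le_rfl⟩
  have hjL : j ∉ L := fun h => (mem_filter.1 h).2.not_gt hkj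
  set D := insert j (L.erase i₀)
  have hmapsTo : Set.MapsTo f D (L.erase k) := by
    intro m hm
    have hfm : f m ∈ S ∧ b (f m) < b k := by
      rcases mem_insert.1 hm with rfl | hm
      · exact ⟨(hmaps m hj).1, hfk⟩
      · obtain ⟨hmi₀, hmL⟩ := mem_erase.1 hm
        obtain ⟨hmS, hmk⟩ := mem_filter.1 hmL
        obtain ⟨hfmS, hfmb⟩ := hmaps m (mem_erase.2 ⟨hmi₀, hmS⟩)
        exact ⟨hfmS, hfmb.trans_le hmk⟩
    exact mem_erase.2 ⟨fun h => hfm.2.ne (congrArg b h), mem_filter.2 ⟨hfm.1, hfm.2.le⟩⟩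
  have hsub : (D : Set ι) ⊆ S.erase i₀ := by
    intro m hm
    rcases mem_insert.1 hm with rfl | hm
    · exact hj
    · exact mem_erase.2 ⟨(mem_erase.1 hm).1, (mem_filter.1 (mem_erase.1 hm).2).1⟩
  have hcard := card_le_card_of_injOn f hmapsTo (hinj.mono hsub)
  rw [card_insert_of_notMem (fun h => hjL (mem_of_mem_erase h)), card_erase_of_mem hkL] at hcard
  have := pred_card_le_card_erase (s := L) (a := i₀)
  have := card_pos.2 ⟨k, hkL⟩
  omega

theorem lt_of_lt_of_injOn_descent (hbinj : Set.InjOn b S) (hmin : ∀ k ∈ S, b i₀ ≤ b k)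
    (hinj : Set.InjOn f (S.erase i₀))
    (hmaps : ∀ j ∈ S.erase i₀, f j ∈ S ∧ b (f j) < b j ∧ a (f j) < a j) :
    ∀ j ∈ S, ∀ k ∈ S, b k < b j → a k < a j := by
  classical
  by_contra! hbad
  obtain ⟨j, hj, hjmin⟩ := exists_min_image
    (S.filter fun j => ∃ k ∈ S, b k < b j ∧ ¬ a k < a j) b (by simpa [Finset.Nonempty] using hbad)
  obtain ⟨hjS, k, hk, hkj, hakj⟩ := mem_filter.1 hj
  have hj' : j ∈ S.erase i₀ := mem_erase.2 ⟨by rintro rfl; exact (hmin k hk).not_gt hkj, hjS⟩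
  obtain ⟨hfjS, hfjb, hfja⟩ := hmaps j hj'
  apply hakj
  rcases (le_apply_of_injOn_descent hinj (fun j hj => (hmaps j hj).imp_right And.left)
    hj' hk hkj).lt_or_eq with hlt | heq
  · have hakfj : a k < a (f j) := by
      by_contra h
      exact (hjmin (f j) (mem_filter.2 ⟨hfjS, k, hk, hlt, h⟩)).not_gt hfjb
    exact hakfj.trans hfja
  · rw [hbinj hk hfjS heq]
    exact hfja

theorem exists_injOn_descent_of_lt_imp_lt (hbinj : Set.InjOn b S) (hi₀ : i₀ ∈ S)
    (hmin : ∀ k ∈ S, b i₀ ≤ b k) (hmono : ∀ j ∈ S, ∀ k ∈ S, b k < b j → a k < a j) :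
    ∃ f : ι → ι, Set.InjOn f (S.erase i₀) ∧
      ∀ j ∈ S.erase i₀, f j ∈ S ∧ b (f j) < b j ∧ a (f j) < a j := by
  have hpred : ∀ j, ∃ p, j ∈ S.erase i₀ →
      p ∈ S ∧ b p < b j ∧ ∀ k ∈ S, b k < b j → b k ≤ b p := by
    intro j
    by_cases hj : j ∈ S.erase i₀
    · obtain ⟨hji₀, hjS⟩ := mem_erase.1 hj
      have hne : (S.filter (b · < b j)).Nonempty :=
        ⟨i₀, mem_filter.2 ⟨hi₀, (hmin j hjS).lt_of_ne fun h => hji₀ (hbinj hjS hi₀ h.symm)⟩⟩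
      obtain ⟨p, hp, hpmax⟩ := exists_max_image _ b hne
      exact ⟨p, fun _ => ⟨(mem_filter.1 hp).1, (mem_filter.1 hp).2,
        fun k hk hkj => hpmax k (mem_filter.2 ⟨hk, hkj⟩)⟩⟩
    · exact ⟨j, fun h => absurd h hj⟩
  choose f hf using hpred
  refine ⟨f, fun x hx y hy hxy => ?_, fun j hj =>
    ⟨(hf j hj).1, (hf j hj).2.1, hmono j (mem_of_mem_erase hj) _ (hf j hj).1 (hf j hj).2.1⟩⟩
  obtain ⟨-, hfxb, hxmax⟩ := hf x hx
  obtain ⟨-, hfyb, hymax⟩ := hf y hy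
  rcases lt_trichotomy (b x) (b y) with h | h | h
  · exact absurd (hymax x (mem_of_mem_erase hx) h) (hxy ▸ hfxb).not_ge
  · exact hbinj (mem_of_mem_erase hx) (mem_of_mem_erase hy) h
  · exact absurd (hxmax y (mem_of_mem_erase hy) h) (hxy ▸ hfyb).not_ge

theorem exists_injOn_descent_iff (hbinj : Set.InjOn b S) (hi₀ : i₀ ∈ S)
    (hmin : ∀ k ∈ S, b i₀ ≤ b k) :
    (∃ f : ι → ι, Set.InjOn f (S.erase i₀) ∧
      ∀ j ∈ S.erase i₀, f j ∈ S ∧ b (f j) < b j ∧ a (f j) < a j) ↔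
    ∀ j ∈ S, ∀ k ∈ S, b k < b j → a k < a j :=
  ⟨fun ⟨_, hinj, hmaps⟩ => lt_of_lt_of_injOn_descent hbinj hmin hinj hmaps,
    exists_injOn_descent_of_lt_imp_lt hbinj hi₀ hmin⟩

end Descent

theorem isLadder_iff {ι : Type*} (Δ : ι → Segment) {S : Finset ι}
    (hb : Set.InjOn (fun i => (Δ i).b) S) :
    IsLadder Δ S ↔ ∀ j ∈ S, ∀ k ∈ S, (Δ k).b < (Δ j).b → (Δ k).a < (Δ j).a := by
  classical
  constructor
  · rintro ⟨e, he⟩ j hj k hk hkj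
    obtain ⟨j', hj'⟩ := e.surjective ⟨j, hj⟩
    obtain ⟨k', hk'⟩ := e.surjective ⟨k, hk⟩
    rcases lt_trichotomy k' j' with h | rfl | h
    · have := (he k' j' h).2
      rw [hj', hk'] at this
      exact absurd hkj this.not_gt
    · obtain rfl : k = j := congrArg Subtype.val (hk'.symm.trans hj')
      exact absurd hkj (lt_irrefl _)
    · have := (he j' k' h).1
      rwa [hj', hk'] at this
  · intro hmono
    set B := S.image fun i => (Δ i).b
    let ψ : S ≃ B := Equiv.ofBijective (fun x => ⟨(Δ x).b, mem_image_of_mem _ x.2⟩)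
      ⟨fun x y hxy => Subtype.ext (hb x.2 y.2 (congrArg Subtype.val hxy)), by
        rintro ⟨_, hy⟩
        obtain ⟨i, hi, rfl⟩ := mem_image.1 hy
        exact ⟨⟨i, hi⟩, rfl⟩⟩
    let o := B.orderIsoOfFin (card_image_of_injOn hb)
    let e : Fin #S ≃ S := Fin.revPerm.trans (o.toEquiv.trans ψ.symm)
    have hb_eq (k : Fin #S) : (Δ (e k)).b = o k.rev :=
      congrArg Subtype.val (ψ.apply_symm_apply (o k.rev))
    refine ⟨e, fun k l hkl => ?_⟩
    have hblt : (Δ (e l)).b < (Δ (e k)).b := by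
      rw [hb_eq, hb_eq]
      exact o.lt_iff_lt.2 (Fin.rev_lt_rev.2 hkl)
    exact ⟨hmono _ (Subtype.prop _) _ (Subtype.prop _) hblt, hblt⟩

namespace Segment

theorem prec_irrefl (Δ : Segment) : ¬ Δ.prec Δ := fun h => lt_irrefl _ h.1

theorem prec_of_shift_prec {Δ Δ' : Segment} (h : Δ.shift.prec Δ') (ha : Δ.a ≠ Δ'.a)
    (hb : Δ.b ≠ Δ'.b) : Δ.prec Δ' := by
  obtain ⟨h₁, h₂, h₃⟩ := h
  simp only [shift] at h₁ h₂ h₃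
  exact ⟨by omega, by omega, by omega⟩

end Segment

section Regular

variable {ι : Type*} {Δ : ι → Segment}

theorem Regular.injective_b (hreg : Regular Δ) : Function.Injective fun i => (Δ i).b :=
  fun i j => hreg.2 i j

theorem Regular.prec_of_shift_prec (hreg : Regular Δ) {i j : ι}
    (h : (Δ i).shift.prec (Δ j)) (hij : i ≠ j) : (Δ i).prec (Δ j) :=
  Segment.prec_of_shift_prec h (fun h' => hij (hreg.1 i j h')) (fun h' => hij (hreg.2 i j h'))

theorem RC_of_forall_not_prec {Δ₀ : Segment} (h : ∀ i, ¬ (Δ i).prec Δ₀) : RC Δ₀ Δ :=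
  ⟨id, Set.injOn_id _, fun i hi => absurd hi (h i)⟩

theorem Regular.not_prec_of_RC_erase [Finite ι] (hreg : Regular Δ) {i₀ : ι}
    (h : RC (Δ i₀) fun i : {i // i ≠ i₀} => Δ i) (i : ι) (hi : i ≠ i₀) :
    ¬ (Δ i).prec (Δ i₀) := by
  classical
  have := Fintype.ofFinite ι
  intro hprec
  obtain ⟨g, -, hg⟩ := h
  obtain ⟨x, hx, hmax⟩ := exists_max_image
    (univ.filter fun x : {i // i ≠ i₀} => (Δ x).prec (Δ i₀)) (fun x => (Δ x).b)
    ⟨⟨i, hi⟩, mem_filter.2 ⟨mem_univ _, hprec⟩⟩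
  obtain ⟨hshift, hlt⟩ := hg x (mem_filter.1 hx).2
  exact (hmax (g x) (mem_filter.2 ⟨mem_univ _, hreg.prec_of_shift_prec hshift (g x).2⟩)).not_gt
    hlt.2.2

variable [Fintype ι] [DecidableEq ι] {i₀ i : ι}

def succFinset (Δ : ι → Segment) (i₀ : ι) : Finset ι :=
  insert i₀ (univ.filter fun i => (Δ i₀).prec (Δ i))

theorem mem_succFinset : i ∈ succFinset Δ i₀ ↔ i = i₀ ∨ (Δ i₀).prec (Δ i) := by
  simp [succFinset]

theorem mem_succFinset_erase : i ∈ (succFinset Δ i₀).erase i₀ ↔ (Δ i₀).prec (Δ i) := by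
  rw [mem_erase, mem_succFinset]
  constructor
  · rintro ⟨hne, h | h⟩
    exacts [absurd h hne, h]
  · intro h
    exact ⟨by rintro rfl; exact Segment.prec_irrefl _ h, Or.inr h⟩

theorem le_of_mem_succFinset (h : i ∈ succFinset Δ i₀) :
    (Δ i₀).a ≤ (Δ i).a ∧ (Δ i₀).b ≤ (Δ i).b := by
  rcases mem_succFinset.1 h with rfl | h
  exacts [⟨le_rfl, le_rfl⟩, ⟨h.1.le, h.2.2.le⟩]

theorem Regular.mem_succFinset_of_shift_prec (hreg : Regular Δ)
    (h : (Δ i₀).shift.prec (Δ i)) : i ∈ succFinset Δ i₀ :=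
  mem_succFinset.2 <| (eq_or_ne i i₀).imp id fun hi => hreg.prec_of_shift_prec h hi.symm

theorem Regular.LC_iff (hreg : Regular Δ) :
    LC (Δ i₀) Δ ↔ ∃ f : ι → ι, Set.InjOn f ((succFinset Δ i₀).erase i₀) ∧
      ∀ j ∈ (succFinset Δ i₀).erase i₀,
        f j ∈ succFinset Δ i₀ ∧ (Δ (f j)).b < (Δ j).b ∧ (Δ (f j)).a < (Δ j).a := by
  have hX : ((succFinset Δ i₀).erase i₀ : Set ι) = {i | (Δ i₀).prec (Δ i)} :=
    Set.ext fun _ => mem_succFinset_erase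
  rw [hX]
  constructor
  · rintro ⟨f, hinj, hf⟩
    refine ⟨f, hinj, fun j hj => ?_⟩
    obtain ⟨hshift, hprec⟩ := hf j (mem_succFinset_erase.1 hj)
    exact ⟨hreg.mem_succFinset_of_shift_prec hshift, hprec.2.2, hprec.1⟩
  · rintro ⟨f, hinj, hf⟩
    refine ⟨f, hinj, fun j hj => ?_⟩
    obtain ⟨hfS, hb, ha⟩ := hf j (mem_succFinset_erase.2 hj)
    have := le_of_mem_succFinset hfS
    have := hj.2.1
    simp only [Segment.prec, Segment.shift]
    omega

end Regular

/-- For a regular multisegment `m` and a segment `Δ_{i₀}` occurring in `m`: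
`LC(Δ_{i₀}, m)`, `RC(Δ_{i₀}, m)` and `RC(Δ_{i₀}, m∖Δ_{i₀})` all hold iff `Δ_{i₀}` is
preceded by no other segment of `m` and `Δ_{i₀}` together with all the segments of `m`
that it precedes forms a ladder. -/
theorem statement5 {N : ℕ} (Δ : Fin N → Segment) (hreg : Regular Δ) (i₀ : Fin N) :
    (LC (Δ i₀) Δ ∧ RC (Δ i₀) Δ ∧
        RC (Δ i₀) (fun i : {i : Fin N // i ≠ i₀} => Δ i.val)) ↔
    ((∀ i : Fin N, i ≠ i₀ → ¬ (Δ i).prec (Δ i₀)) ∧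
      IsLadder Δ (insert i₀ (Finset.univ.filter fun i => (Δ i₀).prec (Δ i)))) := by
  have hbinj : Set.InjOn (fun i => (Δ i).b) (succFinset Δ i₀) := hreg.injective_b.injOn
  have hmin (k : Fin N) (hk : k ∈ succFinset Δ i₀) : (Δ i₀).b ≤ (Δ k).b :=
    (le_of_mem_succFinset hk).2
  change _ ↔ _ ∧ IsLadder Δ (succFinset Δ i₀)
  rw [isLadder_iff Δ hbinj, ← exists_injOn_descent_iff (a := fun i => (Δ i).a) hbinj
    (mem_insert_self _ _) hmin, ← hreg.LC_iff]
  constructor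
  · rintro ⟨hLC, -, hRC⟩
    exact ⟨hreg.not_prec_of_RC_erase hRC, hLC⟩
  · rintro ⟨hnot, hLC⟩
    have hnot' (i : Fin N) : ¬ (Δ i).prec (Δ i₀) :=
      (eq_or_ne i i₀).elim (fun h => h ▸ Segment.prec_irrefl _) (hnot i)
    exact ⟨hLC, RC_of_forall_not_prec hnot', RC_of_forall_not_prec fun i => hnot' i⟩
end

section
/- Let σ ∈ S_N be a permutation avoiding the pattern 3412. Then either columns σ(N) and N of Γ[id,σ] are identical (i.e. for every row index i, (i, σ(N)) ∈ Γ[id,σ] if and only if (i, N) ∈ Γ[id,σ]), or rows σ^{−1}(N) and N of Γ[id,σ] are identical (i.e. for every column index j, (σ^{−1}(N), j) ∈ Γ[id,σ] if and only if (N, j) ∈ Γ[id,σ]). -/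
/-!
Write `b = σ⁻¹(N)`. A point `(i, j)` of `Γ[id,σ]` has some `k ≤ i` with `j ≤ σ k` and some
`k ≥ i` with `σ k ≤ j` (rank counts in the two quadrants at `(i, j)`), while transposing an
inversion of `σ` goes down in Bruhat order. This pins down row `N` (the `j ≥ σ(N)`) and column `N`
(the `i ≥ b`). If `σ(N) ≤ σ(k)` for all `k ≥ b`, row `b` equals row `N`; if `σ(k) < σ(N)` for all
`k < b`, column `σ(N)` equals column `N`. If both fail, witnesses `a < b ≤ c` give
`σ(c) < σ(N) < σ(a) < σ(b) = N`, an occurrence of `3412` at positions `a < b < c < N`.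
-/

/-- `σ ∈ S_N` contains the pattern `τ ∈ S_k` : there are indices `i_1 < ⋯ < i_k` with
`σ(i_s) < σ(i_t) ↔ τ(s) < τ(t)` for all `s, t`. -/
def ContainsPattern {N k : ℕ} (σ : Equiv.Perm (Fin N)) (τ : Equiv.Perm (Fin k)) : Prop :=
  ∃ g : Fin k ↪o Fin N, ∀ s t : Fin k, σ (g s) < σ (g t) ↔ τ s < τ t

/-- `σ` avoids the pattern `τ`. -/
def Avoids {N k : ℕ} (σ : Equiv.Perm (Fin N)) (τ : Equiv.Perm (Fin k)) : Prop :=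
  ¬ ContainsPattern σ τ

/-- The pattern `4231` (in one-line notation), as a permutation of `Fin 4`. -/
def perm4231 : Equiv.Perm (Fin 4) := Equiv.swap 0 3

/-- The pattern `3412` (in one-line notation), as a permutation of `Fin 4`. -/
def perm3412 : Equiv.Perm (Fin 4) := Equiv.swap 0 2 * Equiv.swap 1 3

/-- The Bruhat order on `S_N`, characterized by:
`σ' ≤ σ` iff `#{k ≤ i : σ'(k) ≥ j} ≤ #{k ≤ i : σ(k) ≥ j}` for all `i, j`. -/
def BruhatLE {N : ℕ} (σ' σ : Equiv.Perm (Fin N)) : Prop :=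
  ∀ i j : Fin N,
    (Finset.univ.filter fun k => k ≤ i ∧ j ≤ σ' k).card ≤
      (Finset.univ.filter fun k => k ≤ i ∧ j ≤ σ k).card

instance {N : ℕ} (σ' σ : Equiv.Perm (Fin N)) : Decidable (BruhatLE σ' σ) := by
  unfold BruhatLE; infer_instance

/-- `Γ[id,σ] = {(i, σ'(i)) : σ' ≤ σ}`. -/
def Gamma {N : ℕ} (σ : Equiv.Perm (Fin N)) : Set (Fin N × Fin N) :=
  {p | ∃ σ' : Equiv.Perm (Fin N), BruhatLE σ' σ ∧ σ' p.1 = p.2}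

open Classical in
/-- `M|_{Γ[id,σ]}` : the matrix whose `(i,j)` entry is `M i j` if `(i,j) ∈ Γ[id,σ]`
and `0` otherwise. -/
noncomputable def restrictGamma {N : ℕ} {R : Type*} [CommRing R]
    (M : Matrix (Fin N) (Fin N) R) (σ : Equiv.Perm (Fin N)) :
    Matrix (Fin N) (Fin N) R :=
  Matrix.of fun i j => if (i, j) ∈ Gamma σ then M i j else 0

open Finset

namespace BruhatLE

variable {N : ℕ} {σ' σ τ : Equiv.Perm (Fin N)}

theorem trans (h₁ : BruhatLE σ' σ) (h₂ : BruhatLE σ τ) : BruhatLE σ' τ :=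
  fun i j => (h₁ i j).trans (h₂ i j)

theorem card_lt_lt (h : BruhatLE σ' σ) (i j : Fin N) :
    #{k | k < i ∧ j < σ' k} ≤ #{k | k < i ∧ j < σ k} := by
  by_cases hi : (i : ℕ) = 0
  · have hempty : ∀ k : Fin N, ¬ k < i := fun k hk => by rw [Fin.lt_def] at hk; omega
    simp [hempty]
  by_cases hj : (j : ℕ) + 1 < N
  · convert h ⟨i - 1, by omega⟩ ⟨j + 1, hj⟩ using 3 <;>
      · simp only [Fin.lt_def, Fin.le_def]
        omega
  · have hempty : ∀ k : Fin N, ¬ j < σ' k := fun k hk => by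
      have := (σ' k).isLt; rw [Fin.lt_def] at hk; omega
    simp [hempty]

theorem card_le_lt (h : BruhatLE σ' σ) (i j : Fin N) :
    #{k | i ≤ k ∧ j < σ k} ≤ #{k | i ≤ k ∧ j < σ' k} := by
  have hsplit (π : Equiv.Perm (Fin N)) :
      #{k | k < i ∧ j < π k} + #{k | i ≤ k ∧ j < π k} = #{v | j < v} := by
    have hperm : #{k | j < π k} = #{v | j < v} := card_equiv π (by simp)
    rw [← hperm, ← card_filter_add_card_filter_not (s := {k | j < π k}) (fun k => k < i)]
    simp only [filter_filter, not_lt, and_comm]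
  have := h.card_lt_lt i j
  have := hsplit σ
  have := hsplit σ'
  omega

end BruhatLE

theorem bruhatLE_mul_swap {N : ℕ} (σ : Equiv.Perm (Fin N)) {x y : Fin N} (hxy : x ≤ y)
    (hσ : σ y ≤ σ x) : BruhatLE (σ * Equiv.swap x y) σ := by
  intro i j
  by_cases hy : y ≤ i
  · refine (card_equiv (Equiv.swap x y) fun k => ?_).le
    have hswap : k ≤ i ↔ Equiv.swap x y k ≤ i := by
      rw [Equiv.swap_apply_def]
      split_ifs with hx hy' <;> subst_vars <;> constructor <;> intro <;> order
    simp only [mem_filter, mem_univ, true_and]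
    rw [Equiv.Perm.mul_apply, hswap]
  · refine card_le_card ?_
    intro k
    simp only [mem_filter, mem_univ, true_and]
    rw [Equiv.Perm.mul_apply]
    rintro ⟨hki, hjk⟩
    have hky : k ≠ y := by rintro rfl; exact hy hki
    refine ⟨hki, ?_⟩
    rcases eq_or_ne k x with rfl | hkx
    · rw [Equiv.swap_apply_left] at hjk
      exact hjk.trans hσ
    · rwa [Equiv.swap_apply_of_ne_of_ne hkx hky] at hjk

section Gamma

variable {N : ℕ} {σ' σ : Equiv.Perm (Fin N)}

theorem Gamma_mono (h : BruhatLE σ' σ) : Gamma σ' ⊆ Gamma σ :=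
  fun _ ⟨π, hπ, hp⟩ => ⟨π, hπ.trans h, hp⟩

theorem mem_Gamma_of_inversion {x y : Fin N} (hxy : x ≤ y) (hσ : σ y ≤ σ x) :
    (x, σ y) ∈ Gamma σ ∧ (y, σ x) ∈ Gamma σ :=
  ⟨⟨_, bruhatLE_mul_swap σ hxy hσ, by simp⟩, ⟨_, bruhatLE_mul_swap σ hxy hσ, by simp⟩⟩

theorem exists_le_le_of_mem_Gamma {i j : Fin N} (h : (i, j) ∈ Gamma σ) :
    ∃ k, k ≤ i ∧ j ≤ σ k := by
  obtain ⟨σ', hσ', rfl : σ' i = j⟩ := h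
  have hpos : 0 < #{k | k ≤ i ∧ σ' i ≤ σ k} :=
    (card_pos.mpr ⟨i, by simp⟩).trans_le (hσ' i (σ' i))
  obtain ⟨k, hk⟩ := card_pos.mp hpos
  exact ⟨k, by simpa using hk⟩

theorem exists_ge_le_of_mem_Gamma {i j : Fin N} (h : (i, j) ∈ Gamma σ) :
    ∃ k, i ≤ k ∧ σ k ≤ j := by
  by_contra! hc
  obtain ⟨σ', hσ', rfl : σ' i = j⟩ := h
  -- The quadrant `i ≤ k, σ' i < π k` is full for `π = σ` but misses `k = i` for `π = σ'`.
  have hall : #{k | i ≤ k ∧ σ' i < σ k} = #{k | i ≤ k} := by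
    congr 1; ext k; simpa using hc k
  have hsub : ({k | i ≤ k ∧ σ' i < σ' k} : Finset (Fin N)) ⊂ ({k | i ≤ k} : Finset (Fin N)) :=
    ssubset_of_subset_of_ne (fun k hk => by simp_all) fun he => by
      simpa using he.ge (by simp : i ∈ _)
  have := hσ'.card_le_lt i (σ' i)
  have := card_lt_card hsub
  omega

end Gamma

theorem containsPattern_of_strictMono {N k : ℕ} {σ : Equiv.Perm (Fin N)}
    {τ : Equiv.Perm (Fin k)} {g f : Fin k → Fin N} (hg : StrictMono g) (hf : StrictMono f)
    (hσ : ∀ s, σ (g s) = f (τ s)) : ContainsPattern σ τ :=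
  ⟨OrderEmbedding.ofStrictMono g hg, fun s t => by simp [hσ, hf.lt_iff_lt]⟩

theorem containsPattern_perm3412 {N : ℕ} {σ : Equiv.Perm (Fin N)} {a b c d : Fin N}
    (hab : a < b) (hbc : b < c) (hcd : c < d)
    (hcd' : σ c < σ d) (hda : σ d < σ a) (hab' : σ a < σ b) : ContainsPattern σ perm3412 := by
  refine containsPattern_of_strictMono (g := ![a, b, c, d]) (f := ![σ c, σ d, σ a, σ b])
    ?_ ?_ fun s => ?_
  · refine Fin.strictMono_iff_lt_succ.mpr fun s => ?_
    fin_cases s <;> assumption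
  · refine Fin.strictMono_iff_lt_succ.mpr fun s => ?_
    fin_cases s <;> assumption
  · fin_cases s <;> rfl

section LastRowAndColumn

variable {n : ℕ} {σ : Equiv.Perm (Fin (n + 1))}

theorem mem_Gamma_last_row_iff (j : Fin (n + 1)) :
    (Fin.last n, j) ∈ Gamma σ ↔ σ (Fin.last n) ≤ j := by
  refine ⟨fun h => ?_, fun h => ?_⟩
  · obtain ⟨k, hk, hkj⟩ := exists_ge_le_of_mem_Gamma h
    rwa [Fin.last_le_iff.mp hk] at hkj
  · obtain ⟨c, rfl⟩ := σ.surjective j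
    exact (mem_Gamma_of_inversion (Fin.le_last c) h).2

theorem mem_Gamma_last_column_iff {b : Fin (n + 1)} (hb : σ b = Fin.last n) (i : Fin (n + 1)) :
    (i, Fin.last n) ∈ Gamma σ ↔ b ≤ i := by
  refine ⟨fun h => ?_, fun h => ?_⟩
  · obtain ⟨k, hk, hkL⟩ := exists_le_le_of_mem_Gamma h
    rwa [← σ.injective (hb.trans (Fin.last_le_iff.mp hkL).symm)] at hk
  · rw [← hb]
    exact (mem_Gamma_of_inversion h (hb ▸ Fin.le_last (σ i))).2

theorem mem_Gamma_row_iff_of_forall_ge {b : Fin (n + 1)} (hb : σ b = Fin.last n)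
    (hrow : ∀ k, b ≤ k → σ (Fin.last n) ≤ σ k) (j : Fin (n + 1)) :
    (b, j) ∈ Gamma σ ↔ σ (Fin.last n) ≤ j := by
  refine ⟨fun h => ?_, fun h => ?_⟩
  · obtain ⟨k, hk, hkj⟩ := exists_ge_le_of_mem_Gamma h
    exact (hrow k hk).trans hkj
  obtain ⟨c, rfl⟩ := σ.surjective j
  rcases le_or_gt b c with hbc | hcb
  · exact (mem_Gamma_of_inversion hbc (hb ▸ Fin.le_last (σ c))).1
  · have hcL : c ≠ Fin.last n := (hcb.trans_le (Fin.le_last b)).ne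
    have hσ₁ := Gamma_mono (bruhatLE_mul_swap σ (Fin.le_last b) (by rw [hb]; exact Fin.le_last _))
    have := (mem_Gamma_of_inversion (σ := σ * Equiv.swap b (Fin.last n)) hcb.le
      (by simpa [Equiv.swap_apply_of_ne_of_ne hcb.ne hcL] using h)).2
    simpa [Equiv.swap_apply_of_ne_of_ne hcb.ne hcL] using hσ₁ this

theorem mem_Gamma_column_iff_of_forall_lt {b : Fin (n + 1)} (hb : σ b = Fin.last n)
    (hcol : ∀ k, k < b → σ k < σ (Fin.last n)) (i : Fin (n + 1)) :
    (i, σ (Fin.last n)) ∈ Gamma σ ↔ b ≤ i := by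
  refine ⟨fun h => ?_, fun hbi => ?_⟩
  · obtain ⟨k, hk, hLk⟩ := exists_le_le_of_mem_Gamma h
    by_contra! hib
    exact (hcol k (hk.trans_lt hib)).not_ge hLk
  rcases le_or_gt (σ (Fin.last n)) (σ i) with hLi | hiL
  · exact (mem_Gamma_of_inversion (Fin.le_last i) hLi).1
  · have hib : i ≠ b := by rintro rfl; exact (hiL.trans_le (Fin.le_last _)).ne hb
    have hiL' : i ≠ Fin.last n := by rintro rfl; exact hiL.false
    have hσ₁ := Gamma_mono (bruhatLE_mul_swap σ (Fin.le_last b) (by rw [hb]; exact Fin.le_last _))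
    have := (mem_Gamma_of_inversion (σ := σ * Equiv.swap b (Fin.last n)) hbi
      (by simpa [Equiv.swap_apply_of_ne_of_ne hib hiL'] using hiL.le)).2
    simpa using hσ₁ this

theorem containsPattern_perm3412_of_lt_of_le {a b c : Fin (n + 1)} (hb : σ b = Fin.last n)
    (hab : a < b) (ha : σ (Fin.last n) ≤ σ a) (hbc : b ≤ c) (hc : σ c < σ (Fin.last n)) :
    ContainsPattern σ perm3412 := by
  have hcb : c ≠ b := by rintro rfl; exact (hc.trans_le (Fin.le_last _)).ne hb
  have hcL : c ≠ Fin.last n := by rintro rfl; exact hc.false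
  have haL : a ≠ Fin.last n := (hab.trans_le (Fin.le_last b)).ne
  refine containsPattern_perm3412 hab (hbc.lt_of_ne hcb.symm) (Fin.lt_last_iff_ne_last.mpr hcL)
    hc (ha.lt_of_ne (σ.injective.ne haL.symm)) ?_
  exact hb ▸ (Fin.le_last _).lt_of_ne (hb ▸ σ.injective.ne hab.ne)

end LastRowAndColumn

/-- Lemma A.3 (lem_ferrers): if `σ ∈ S_N` (with `N = n+1 ≥ 1`) avoids the pattern `3412`,
then either columns `σ(N)` and `N` of `Γ[id,σ]` are identical, or rows `σ⁻¹(N)` and `N`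
of `Γ[id,σ]` are identical. (The last row/column index `N` is `Fin.last n`.) -/
theorem statement12 {n : ℕ} (σ : Equiv.Perm (Fin (n + 1)))
    (hav : Avoids σ perm3412) :
    (∀ i : Fin (n + 1),
        (i, σ (Fin.last n)) ∈ Gamma σ ↔ (i, Fin.last n) ∈ Gamma σ) ∨
    (∀ j : Fin (n + 1),
        (σ⁻¹ (Fin.last n), j) ∈ Gamma σ ↔ (Fin.last n, j) ∈ Gamma σ) := by
  have hb : σ (σ⁻¹ (Fin.last n)) = Fin.last n := σ.apply_symm_apply _
  by_cases hrow : ∀ k, σ⁻¹ (Fin.last n) ≤ k → σ (Fin.last n) ≤ σ k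
  · exact Or.inr fun j =>
      (mem_Gamma_row_iff_of_forall_ge hb hrow j).trans (mem_Gamma_last_row_iff j).symm
  by_cases hcol : ∀ k, k < σ⁻¹ (Fin.last n) → σ k < σ (Fin.last n)
  · exact Or.inl fun i =>
      (mem_Gamma_column_iff_of_forall_lt hb hcol i).trans (mem_Gamma_last_column_iff hb i).symm
  push Not at hrow hcol
  obtain ⟨c, hbc, hc⟩ := hrow
  obtain ⟨a, hab, ha⟩ := hcol
  exact (hav (containsPattern_perm3412_of_lt_of_le hb hab ha hbc hc)).elim
end
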